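/- Let G be a 3-γₜ-edge-critical graph, let {x, y} be a vertex cut of G of size two, and suppose G has diameter two. Then x and y are nonadjacent. -/

import Mathlib

/-- The total domination number of a graph, as an extended natural number
(`⊤` when no total dominating set exists). -/
noncomputable def gammaT {V : Type*} (G : SimpleGraph V) : ℕ∞ :=
  sInf {n : ℕ∞ | ∃ S : Finset V, (S.card : ℕ∞) = n ∧ ∀ v : V, ∃ u ∈ S, G.Adj v u}

/-- G has diameter two. -/
def DiamTwo {V : Type*} (G : SimpleGraph V) : Prop :=
  (∀ u v : V, u ≠ v → G.Adj u v ∨ ∃ w : V, G.Adj u w ∧ G.Adj w v) ∧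
    ∃ u v : V, u ≠ v ∧ ¬ G.Adj u v

/-- Removing the vertex set S disconnects G. -/
def RemovalDisconnects {V : Type*} (G : SimpleGraph V) (S : Set V) : Prop :=
  ∃ a b : (Sᶜ : Set V), ¬ (G.induce Sᶜ).Reachable a b

/-- G is 3-γₜ-edge-critical. -/
def Critical3 {V : Type*} [DecidableEq V] (G : SimpleGraph V) : Prop :=
  gammaT G = 3 ∧
    ∀ u v : V, u ≠ v → ¬ G.Adj u v →
      gammaT (G ⊔ SimpleGraph.fromEdgeSet {s(u, v)}) = 2

/-!
Since `G` has diameter two, a vertex `v` outside the cut `{x, y}` shares a neighbour with every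
vertex `w` of another component of `G - {x, y}`, and that neighbour can only be `x` or `y`. So
`{x, y}` dominates `G`; if `x` and `y` were adjacent it would even be a total dominating set of
size two, contradicting `γₜ(G) = 3`.
-/

namespace SimpleGraph

variable {V : Type*} (G : SimpleGraph V)

def IsTotalDominating (S : Finset V) : Prop :=
  ∀ v : V, ∃ u ∈ S, G.Adj v u

variable {G}

theorem gammaT_le_card {S : Finset V} (hS : G.IsTotalDominating S) : gammaT G ≤ S.card :=
  sInf_le ⟨S, rfl, hS⟩

theorem _root_.RemovalDisconnects.exists_not_reachable {S : Set V} (hS : RemovalDisconnects G S)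
    (v : (Sᶜ : Set V)) : ∃ w, ¬ (G.induce Sᶜ).Reachable v w := by
  obtain ⟨a, b, hab⟩ := hS
  by_contra! h
  exact hab ((h a).symm.trans (h b))

theorem _root_.RemovalDisconnects.exists_adj_mem
    (hdiam : ∀ u v : V, u ≠ v → G.Adj u v ∨ ∃ w : V, G.Adj u w ∧ G.Adj w v)
    {S : Set V} (hS : RemovalDisconnects G S) {v : V} (hv : v ∉ S) : ∃ u ∈ S, G.Adj v u := by
  obtain ⟨w, hw⟩ := hS.exists_not_reachable ⟨v, hv⟩
  have hvw : v ≠ w := fun h => hw (by rw [show (⟨v, hv⟩ : (Sᶜ : Set V)) = w from Subtype.ext h])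
  obtain hvw_adj | ⟨u, hvu, huw⟩ := hdiam v w hvw
  · have hvw_adj' : (G.induce Sᶜ).Adj ⟨v, hv⟩ w := hvw_adj
    exact (hw hvw_adj'.reachable).elim
  · refine ⟨u, ?_, hvu⟩
    by_contra hu
    have hvu' : (G.induce Sᶜ).Adj ⟨v, hv⟩ ⟨u, hu⟩ := hvu
    have huw' : (G.induce Sᶜ).Adj ⟨u, hu⟩ w := huw
    exact hw (hvu'.reachable.trans huw'.reachable)

theorem isTotalDominating_pair_of_adj [DecidableEq V] {x y : V} (hxy : G.Adj x y)
    (hdom : ∀ v, v ∉ ({x, y} : Set V) → ∃ u ∈ ({x, y} : Set V), G.Adj v u) :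
    G.IsTotalDominating {x, y} := by
  intro v
  by_cases hv : v ∈ ({x, y} : Set V)
  · rcases hv with rfl | rfl
    · exact ⟨y, by simp, hxy⟩
    · exact ⟨x, by simp, hxy.symm⟩
  · simpa using hdom v hv

end SimpleGraph

open SimpleGraph in
theorem stmt11_general {V : Type*} [DecidableEq V] (G : SimpleGraph V)
    (hcrit : Critical3 G) (hdiam : DiamTwo G)
    (x y : V) (hcut : RemovalDisconnects G {x, y}) :
    ¬ G.Adj x y := by
  intro hxy
  have htotal : G.IsTotalDominating {x, y} :=
    isTotalDominating_pair_of_adj hxy fun _ hv => hcut.exists_adj_mem hdiam.1 hv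
  have hle : gammaT G ≤ 2 := by
    simpa [Finset.card_pair hxy.ne] using gammaT_le_card htotal
  rw [hcrit.1] at hle
  norm_num at hle

/-- In a 3-γₜ-edge-critical graph of diameter two, the two
vertices of a two-vertex cut are nonadjacent. -/
theorem stmt11 {V : Type*} [DecidableEq V] (G : SimpleGraph V)
    (hcrit : Critical3 G) (hconn : G.Connected) (hdiam : DiamTwo G)
    (x y : V) (hxy : x ≠ y) (hcut : RemovalDisconnects G {x, y}) :
    ¬ G.Adj x y :=
  stmt11_general G hcrit hdiam x y hcut
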